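/- arXiv:1509.08229 — 3 statements merged into one kernel-verified Lean document; each statement's English description precedes it below -/
import Mathlib

section
/- Let L ⊣ R: D ⇄ C be an adjunction between categories with finite products satisfying Frobenius reciprocity, and let S be an object of C. Then for every object W of D and X of C there are isomorphisms of presheaves S^X ∘ L^op ≅ (RS)^{RX} and (RS)^W ∘ R^op ≅ S^{LW}, where S^X denotes the presheaf Y ↦ C(Y × X, S). -/
/-!
Writing `S^X` as the representable `C(-, S)` precomposed with `(- ⨯ X)ᵒᵖ`, both isomorphisms
are whiskerings of two natural isomorphisms: the Frobenius isomorphism `L(RX ⨯ W) ≅ X ⨯ LW`,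
natural in `W` for the first and in `X` for the second, and the adjunction isomorphism
`C(L-, S) ≅ D(-, RS)`. The first one also needs the braiding, since there `X` sits on the left.
-/

open CategoryTheory CategoryTheory.Limits

universe u v

variable {C : Type u} [Category.{v} C] [HasFiniteProducts C]


/-- The presheaf `S^X : Y ↦ C(Y × X, S)`. -/
noncomputable def pow (S X : C) : Cᵒᵖ ⥤ Type v where
  obj Z := (Opposite.unop Z ⨯ X) ⟶ S
  map f := TypeCat.ofHom fun u => prod.map f.unop (𝟙 X) ≫ u
  map_id Z := by ext u; simp
  map_comp f g := by
    ext u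
    show prod.map ((f ≫ g).unop) (𝟙 X) ≫ u
      = prod.map g.unop (𝟙 X) ≫ prod.map f.unop (𝟙 X) ≫ u
    rw [← Category.assoc, prod.map_map]; simp

/-- Contravariant action `S^f : S^Y ⟶ S^X` for `f : X ⟶ Y`. -/
noncomputable def powMap (S : C) {X Y : C} (f : X ⟶ Y) : pow S Y ⟶ pow S X where
  app Z := TypeCat.ofHom fun u => prod.map (𝟙 _) f ≫ u
  naturality Z W g := by
    ext u
    show prod.map (𝟙 _) f ≫ prod.map g.unop (𝟙 Y) ≫ u
      = prod.map g.unop (𝟙 X) ≫ prod.map (𝟙 _) f ≫ u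
    erw [← Category.assoc, ← Category.assoc, prod.map_map, prod.map_map]
    simp

@[simp] lemma powMap_id (S X : C) : powMap S (𝟙 X) = 𝟙 (pow S X) := by
  apply NatTrans.ext; funext Z; ext u; simp [powMap, pow]; rfl

@[simp] lemma powMap_comp (S : C) {X Y Z : C} (f : X ⟶ Y) (g : Y ⟶ Z) :
    powMap S (f ≫ g) = powMap S g ≫ powMap S f := by
  apply NatTrans.ext; funext W; ext u
  show prod.map (𝟙 _) (f ≫ g) ≫ u = prod.map (𝟙 _) f ≫ prod.map (𝟙 _) g ≫ u
  erw [← Category.assoc, prod.map_map]; simp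

variable {D : Type u} [Category.{v} D] [HasFiniteProducts D]

/-- The canonical Frobenius comparison map `L(R(X) × W) ⟶ X × LW`. -/
noncomputable def frobeniusMap (L : D ⥤ C) (R : C ⥤ D) (adj : L ⊣ R) (W : D) (X : C) :
    L.obj (R.obj X ⨯ W) ⟶ X ⨯ L.obj W :=
  prod.lift (L.map prod.fst ≫ adj.counit.app X) (L.map prod.snd)

noncomputable def powIsoYoneda (S X : C) :
    pow S X ≅ (prod.functor.flip.obj X).op ⋙ yoneda.obj S :=
  NatIso.ofComponents (fun _ => Iso.refl _)

noncomputable def prodFunctorFlipIso (X : C) : prod.functor.flip.obj X ≅ prod.functor.obj X :=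
  NatIso.ofComponents (fun Y => prod.braiding Y X) (fun f => braid_natural f (𝟙 X))

noncomputable def powIsoYonedaProdFunctor (S X : C) :
    pow S X ≅ (prod.functor.obj X).op ⋙ yoneda.obj S :=
  powIsoYoneda S X ≪≫ Functor.isoWhiskerRight (NatIso.op (prodFunctorFlipIso X).symm) _

section Frobenius

variable (L : D ⥤ C) (R : C ⥤ D) (adj : L ⊣ R)

lemma frobeniusMap_eq_prodComparison_comp (W : D) (X : C) :
    frobeniusMap L R adj W X =
      prodComparison L (R.obj X) W ≫ prod.map (adj.counit.app X) (𝟙 _) := by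
  apply prod.hom_ext <;> simp only [frobeniusMap, prod.lift_fst, prod.lift_snd] <;> simp

lemma frobeniusMap_naturality_left (W : D) {X X' : C} (g : X ⟶ X') :
    L.map (prod.map (R.map g) (𝟙 W)) ≫ frobeniusMap L R adj W X' =
      frobeniusMap L R adj W X ≫ prod.map g (𝟙 (L.obj W)) := by
  simp [frobeniusMap_eq_prodComparison_comp, prodComparison_natural_assoc]

lemma frobeniusMap_naturality_right (X : C) {W W' : D} (f : W ⟶ W') :
    L.map (prod.map (𝟙 (R.obj X)) f) ≫ frobeniusMap L R adj W' X =
      frobeniusMap L R adj W X ≫ prod.map (𝟙 X) (L.map f) := by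
  simp [frobeniusMap_eq_prodComparison_comp, prodComparison_natural_assoc]

noncomputable def frobeniusIsoLeft (W : D) [∀ X, IsIso (frobeniusMap L R adj W X)] :
    R ⋙ prod.functor.flip.obj W ⋙ L ≅ prod.functor.flip.obj (L.obj W) :=
  NatIso.ofComponents (fun X => (asIso (frobeniusMap L R adj W X) : L.obj (R.obj X ⨯ W) ≅ _))
    (frobeniusMap_naturality_left L R adj W)

noncomputable def frobeniusIsoRight (X : C) [∀ W, IsIso (frobeniusMap L R adj W X)] :
    prod.functor.obj (R.obj X) ⋙ L ≅ L ⋙ prod.functor.obj X :=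
  NatIso.ofComponents (fun W => (asIso (frobeniusMap L R adj W X) : L.obj (R.obj X ⨯ W) ≅ _))
    (frobeniusMap_naturality_right L R adj X)

noncomputable def leftOpCompPowIso (S X : C) [∀ W, IsIso (frobeniusMap L R adj W X)] :
    L.op ⋙ pow S X ≅ pow (R.obj S) (R.obj X) :=
  calc L.op ⋙ pow S X
      ≅ (L ⋙ prod.functor.obj X).op ⋙ yoneda.obj S :=
        Functor.isoWhiskerLeft L.op (powIsoYonedaProdFunctor S X)
    _ ≅ (prod.functor.obj (R.obj X) ⋙ L).op ⋙ yoneda.obj S :=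
        Functor.isoWhiskerRight (NatIso.op (frobeniusIsoRight L R adj X)) _
    _ ≅ (prod.functor.obj (R.obj X)).op ⋙ yoneda.obj (R.obj S) :=
        Functor.isoWhiskerLeft (prod.functor.obj (R.obj X)).op (adj.compYonedaIso.app S).symm
    _ ≅ pow (R.obj S) (R.obj X) := (powIsoYonedaProdFunctor _ _).symm

noncomputable def rightOpCompPowIso (S : C) (W : D) [∀ X, IsIso (frobeniusMap L R adj W X)] :
    R.op ⋙ pow (R.obj S) W ≅ pow S (L.obj W) :=
  calc R.op ⋙ pow (R.obj S) W
      ≅ (R ⋙ prod.functor.flip.obj W).op ⋙ yoneda.obj (R.obj S) :=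
        Functor.isoWhiskerLeft R.op (powIsoYoneda _ W)
    _ ≅ (R ⋙ prod.functor.flip.obj W ⋙ L).op ⋙ yoneda.obj S :=
        Functor.isoWhiskerLeft (R ⋙ prod.functor.flip.obj W).op (adj.compYonedaIso.app S)
    _ ≅ (prod.functor.flip.obj (L.obj W)).op ⋙ yoneda.obj S :=
        Functor.isoWhiskerRight (NatIso.op (frobeniusIsoLeft L R adj W)).symm _
    _ ≅ pow S (L.obj W) := (powIsoYoneda _ _).symm

end Frobenius

/-- If `L ⊣ R` satisfies Frobenius reciprocity then for every `W` in `D` and `X` in `C`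
there are isomorphisms of presheaves `S^X ∘ L^op ≅ (RS)^{RX}` and `(RS)^W ∘ R^op ≅ S^{LW}`. -/
theorem frobenius_pow_isos (L : D ⥤ C) (R : C ⥤ D) (adj : L ⊣ R)
    (frob : ∀ (W : D) (X : C), IsIso (frobeniusMap L R adj W X)) (S : C) :
    ∀ (W : D) (X : C),
      Nonempty ((L.op ⋙ pow S X) ≅ pow (R.obj S) (R.obj X)) ∧
      Nonempty ((R.op ⋙ pow (R.obj S) W) ≅ pow S (L.obj W)) :=
  fun W X => ⟨⟨leftOpCompPowIso L R adj S X⟩, ⟨rightOpCompPowIso L R adj S W⟩⟩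
end

section
/- Let A be an order-internal meet semilattice in an order-enriched category C with finite products, and suppose ψ: A → A is an inflationary idempotent (Id_A ⊑ ψ, ψψ = ψ) split as ψ = i∘q with q∘i = Id_{A_0} for some object A_0 with i: A_0 → A, q: A → A_0. Then A_0 is an order-internal meet semilattice with top q∘1_A and meet q ∘ ⊓_A ∘ (i × i), the inclusion i is a meet semilattice homomorphism, and q preserves the top element. -/
/-!
A top element of `A` is fixed by every inflationary `ψ`, since it is the greatest element, and
so is a meet of two `ψ`-fixed elements, since `ψ` is monotone and commutes with the diagonal.
Hence `i` commutes with the transported top and meet. The unit and counit inequalities on `A₀`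
are those of `A` conjugated by the retraction: `i ≫ e ≫ q` is above (below) `𝟙 A₀` whenever
`e` is above (below) the identity.
-/

open CategoryTheory CategoryTheory.Limits

universe u v

/-- An order-enriched category: hom-sets are posets and composition is monotone
in both arguments. -/
class CompMono (C : Type u) [Category.{v} C] [∀ X Y : C, PartialOrder (X ⟶ Y)] : Prop where
  comp_le : ∀ {X Y Z : C} {f f' : X ⟶ Y} {g g' : Y ⟶ Z}, f ≤ f' → g ≤ g' → f ≫ g ≤ f' ≫ g'

variable {C : Type u} [Category.{v} C] [HasFiniteProducts C]
  [∀ X Y : C, PartialOrder (X ⟶ Y)] [CompMono C]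

/-- An order-internal meet semilattice: a top element right adjoint to the unique map
to the terminal object, and a meet right adjoint to the diagonal. -/
structure MeetOb (A : C) where
  top : ⊤_ C ⟶ A
  meet : A ⨯ A ⟶ A
  top_unit : 𝟙 A ≤ terminal.from A ≫ top
  meet_unit : 𝟙 A ≤ prod.lift (𝟙 A) (𝟙 A) ≫ meet
  meet_counit : meet ≫ prod.lift (𝟙 A) (𝟙 A) ≤ 𝟙 (A ⨯ A)

namespace CompMono

section

variable {D : Type*} [Category D] [∀ X Y : D, PartialOrder (X ⟶ Y)] [CompMono D]

theorem whisker_left {X Y Z : D} (f : X ⟶ Y) {g g' : Y ⟶ Z} (h : g ≤ g') : f ≫ g ≤ f ≫ g' :=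
  comp_le le_rfl h

theorem le_comp_of_id_le {X Y : D} (f : X ⟶ Y) {e : Y ⟶ Y} (he : 𝟙 Y ≤ e) : f ≤ f ≫ e := by
  simpa using whisker_left f he

theorem id_le_comp_comp_of_id_le {A B : D} {i : B ⟶ A} {q : A ⟶ B} (hiq : i ≫ q = 𝟙 B)
    {e : A ⟶ A} (he : 𝟙 A ≤ e) : 𝟙 B ≤ i ≫ e ≫ q := by
  simpa [hiq] using whisker_left i (comp_le he (le_refl q))

theorem comp_comp_le_id_of_le_id {A B : D} {i : B ⟶ A} {q : A ⟶ B} (hiq : i ≫ q = 𝟙 B)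
    {e : A ⟶ A} (he : e ≤ 𝟙 A) : i ≫ e ≫ q ≤ 𝟙 B := by
  simpa [hiq] using whisker_left i (comp_le he (le_refl q))

end

end CompMono

open CompMono

namespace MeetOb

variable {A : C} (M : MeetOb A)

theorem le_from_comp_top {X : C} (x : X ⟶ A) : x ≤ terminal.from X ≫ M.top :=
  calc x ≤ x ≫ terminal.from A ≫ M.top := le_comp_of_id_le x M.top_unit
    _ = terminal.from X ≫ M.top := by rw [← Category.assoc, terminal.hom_ext (x ≫ _)]

theorem top_comp_eq_of_id_le {ψ : A ⟶ A} (hψ : 𝟙 A ≤ ψ) : M.top ≫ ψ = M.top := by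
  refine le_antisymm ?_ (le_comp_of_id_le _ hψ)
  simpa [terminal.hom_ext (terminal.from _) (𝟙 _)] using M.le_from_comp_top (M.top ≫ ψ)

theorem le_comp_meet_of_comp_diag_le {X : C} {x : X ⟶ A} {p : X ⟶ A ⨯ A}
    (h : x ≫ diag A ≤ p) : x ≤ p ≫ M.meet :=
  calc x ≤ x ≫ diag A ≫ M.meet := le_comp_of_id_le x M.meet_unit
    _ ≤ p ≫ M.meet := by rw [← Category.assoc]; exact comp_le h le_rfl

theorem comp_meet_comp_eq_of_id_le {ψ : A ⟶ A} (hψ : 𝟙 A ≤ ψ) {X : C} {p : X ⟶ A ⨯ A}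
    (hp : p ≫ prod.map ψ ψ = p) : p ≫ M.meet ≫ ψ = p ≫ M.meet := by
  refine le_antisymm (M.le_comp_meet_of_comp_diag_le ?_)
    (by simpa using le_comp_of_id_le (p ≫ M.meet) hψ)
  calc (p ≫ M.meet ≫ ψ) ≫ diag A = p ≫ (M.meet ≫ diag A) ≫ prod.map ψ ψ := by
        simp [prod.lift_map]
    _ ≤ p ≫ 𝟙 _ ≫ prod.map ψ ψ := whisker_left p (comp_le M.meet_counit le_rfl)
    _ = p := by rw [Category.id_comp, hp]

end MeetOb

theorem split_inflationary_idempotent_meetOb_general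
    {A A₀ : C} (MA : MeetOb A) (ψ : A ⟶ A) (hinfl : 𝟙 A ≤ ψ)
    (i : A₀ ⟶ A) (q : A ⟶ A₀) (hsplit : ψ = q ≫ i) (hsect : i ≫ q = 𝟙 A₀) :
    -- A₀ is an order-internal meet semilattice with the stated structure:
    (𝟙 A₀ ≤ terminal.from A₀ ≫ (MA.top ≫ q)) ∧
    (𝟙 A₀ ≤ prod.lift (𝟙 A₀) (𝟙 A₀) ≫ (prod.map i i ≫ MA.meet ≫ q)) ∧
    ((prod.map i i ≫ MA.meet ≫ q) ≫ prod.lift (𝟙 A₀) (𝟙 A₀) ≤ 𝟙 (A₀ ⨯ A₀)) ∧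
    -- `i` is a meet semilattice homomorphism:
    ((MA.top ≫ q) ≫ i = MA.top) ∧
    ((prod.map i i ≫ MA.meet ≫ q) ≫ i = prod.map i i ≫ MA.meet) ∧
    -- `q` preserves the top element:
    (MA.top ≫ q = MA.top ≫ q) := by
  have hiψ : i ≫ ψ = i := by rw [hsplit, ← Category.assoc, hsect, Category.id_comp]
  have hprod_sect : prod.map i i ≫ prod.map q q = 𝟙 (A₀ ⨯ A₀) := by
    rw [prod.map_map, hsect, prod.map_id_id]
  refine ⟨?_, ?_, ?_, ?_, ?_, rfl⟩
  · calc 𝟙 A₀ ≤ i ≫ (terminal.from A ≫ MA.top) ≫ q := id_le_comp_comp_of_id_le hsect MA.top_unit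
      _ = terminal.from A₀ ≫ MA.top ≫ q := by simp
  · calc 𝟙 A₀ ≤ i ≫ (diag A ≫ MA.meet) ≫ q := id_le_comp_comp_of_id_le hsect MA.meet_unit
      _ = _ := by simp [prod.comp_lift_assoc]
  · calc _ = prod.map i i ≫ (MA.meet ≫ diag A) ≫ prod.map q q := by simp [prod.lift_map]
      _ ≤ 𝟙 (A₀ ⨯ A₀) := comp_comp_le_id_of_le_id hprod_sect MA.meet_counit
  · rw [Category.assoc, ← hsplit, MA.top_comp_eq_of_id_le hinfl]
  · rw [Category.assoc, Category.assoc, ← hsplit,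
      MA.comp_meet_comp_eq_of_id_le hinfl (by rw [prod.map_map, hiψ])]

/-- If `A` is an order-internal meet semilattice and `ψ = q ≫ i` is a splitting of an
inflationary idempotent `ψ : A ⟶ A` (with `i ≫ q = 𝟙 A₀`), then `A₀` is an order-internal
meet semilattice with top `MA.top ≫ q` and meet `prod.map i i ≫ MA.meet ≫ q`, the
inclusion `i` is a meet semilattice homomorphism, and `q` preserves the top element. -/
theorem split_inflationary_idempotent_meetOb
    {A A₀ : C} (MA : MeetOb A) (ψ : A ⟶ A) (hinfl : 𝟙 A ≤ ψ) (hidem : ψ ≫ ψ = ψ)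
    (i : A₀ ⟶ A) (q : A ⟶ A₀) (hsplit : ψ = q ≫ i) (hsect : i ≫ q = 𝟙 A₀) :
    -- A₀ is an order-internal meet semilattice with the stated structure:
    (𝟙 A₀ ≤ terminal.from A₀ ≫ (MA.top ≫ q)) ∧
    (𝟙 A₀ ≤ prod.lift (𝟙 A₀) (𝟙 A₀) ≫ (prod.map i i ≫ MA.meet ≫ q)) ∧
    ((prod.map i i ≫ MA.meet ≫ q) ≫ prod.lift (𝟙 A₀) (𝟙 A₀) ≤ 𝟙 (A₀ ⨯ A₀)) ∧
    -- `i` is a meet semilattice homomorphism: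
    ((MA.top ≫ q) ≫ i = MA.top) ∧
    ((prod.map i i ≫ MA.meet ≫ q) ≫ i = prod.map i i ≫ MA.meet) ∧
    -- `q` preserves the top element:
    (MA.top ≫ q = MA.top ≫ q) :=
  split_inflationary_idempotent_meetOb_general MA ψ hinfl i q hsplit hsect
end

section
/- In an order-enriched category, suppose given a fork c: C → A with a∘c = b∘c for parallel arrows a, b: A ⇉ B, together with q: A → C and t: B → A satisfying t∘a = c∘q ⊒ Id_A, q∘c = Id_C, and t∘b ⊑ Id_A. Then c is an equalizer of a and b. -/
open CategoryTheory CategoryTheory.Limits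

universe u v

/-!
The idempotent `q ≫ c = a ≫ t` lies above `𝟙 A`, while on any map `d` equalizing `a` and `b`
it acts as `b ≫ t ≤ 𝟙 A`; hence `d ≫ q ≫ c = d`, so `d` factors through `c` via `d ≫ q`, and
uniquely because `c` is split mono.
-/

def Fork.IsLimit.ofRetraction {C : Type u} [Category.{v} C] {E A B : C} {a b : A ⟶ B}
    {c : E ⟶ A} (w : c ≫ a = c ≫ b) (q : A ⟶ E) (hq : c ≫ q = 𝟙 E)
    (hfix : ∀ {D : C} (d : D ⟶ A), d ≫ a = d ≫ b → d ≫ q ≫ c = d) :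
    IsLimit (Fork.ofι c w) :=
  Fork.IsLimit.mk _ (fun s => s.ι ≫ q) (fun s => by simpa using hfix s.ι s.condition)
    fun s m hm => by
      rw [← show m ≫ c = s.ι from hm, Category.assoc, hq]
      exact (Category.comp_id m).symm

namespace CompMono

variable {C : Type u} [Category.{v} C] [∀ X Y : C, PartialOrder (X ⟶ Y)] [CompMono C]

theorem comp_le_comp_left {X Y Z : C} (f : X ⟶ Y) {g g' : Y ⟶ Z} (h : g ≤ g') :
    f ≫ g ≤ f ≫ g' :=
  comp_le le_rfl h

theorem comp_comp_eq_self_of_le {D A B : C} {a b : A ⟶ B} {t : B ⟶ A}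
    (ha : 𝟙 A ≤ a ≫ t) (hb : b ≫ t ≤ 𝟙 A) {d : D ⟶ A} (hd : d ≫ a = d ≫ b) :
    d ≫ a ≫ t = d :=
  le_antisymm
    (calc d ≫ a ≫ t = d ≫ b ≫ t := by rw [← Category.assoc, hd, Category.assoc]
      _ ≤ d ≫ 𝟙 A := comp_le_comp_left d hb
      _ = d := Category.comp_id d)
    (calc d = d ≫ 𝟙 A := (Category.comp_id d).symm
      _ ≤ d ≫ a ≫ t := comp_le_comp_left d ha)

end CompMono

/-- In an order-enriched category, given a fork `c : E ⟶ A` with `c ≫ a = c ≫ b`,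
together with `q : A ⟶ E` and `t : B ⟶ A` satisfying `a ≫ t = q ≫ c`,
`𝟙 A ≤ q ≫ c`, `c ≫ q = 𝟙 E` and `b ≫ t ≤ 𝟙 A`, the morphism `c` is an
equalizer of `a` and `b`. -/
theorem orderEnriched_split_fork_isEqualizer
    {C : Type u} [Category.{v} C] [∀ X Y : C, PartialOrder (X ⟶ Y)] [CompMono C]
    {E A B : C} (a b : A ⟶ B) (c : E ⟶ A) (w : c ≫ a = c ≫ b)
    (q : A ⟶ E) (t : B ⟶ A)
    (h1 : a ≫ t = q ≫ c) (h2 : 𝟙 A ≤ q ≫ c) (h3 : c ≫ q = 𝟙 E) (h4 : b ≫ t ≤ 𝟙 A) :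
    Nonempty (IsLimit (Fork.ofι c w)) :=
  ⟨Fork.IsLimit.ofRetraction w q h3 fun d hd => by
    rw [← h1] at h2 ⊢
    exact CompMono.comp_comp_eq_self_of_le h2 h4 hd⟩
end
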